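/- Let A = F_p[x₀, x₁, x₂, …]/(x_{i+1}² − x_i : i ≥ 0) and B = A/(x₀). Then every x_i is nilpotent in B, and the quotient of B by its nilradical is isomorphic to F_p. In particular B is not reduced (for p arbitrary, B ≠ B_red) while B_red ≅ F_p. -/

import Mathlib

/-- The ring `A = F_p[x₀, x₁, …]/(x_{i+1}² − x_i)`. -/
def SqrtA (p : ℕ) : Type :=
  MvPolynomial ℕ (ZMod p) ⧸
    Ideal.span {f : MvPolynomial ℕ (ZMod p) |
      ∃ i : ℕ, f = MvPolynomial.X (i + 1) ^ 2 - MvPolynomial.X i}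

noncomputable instance (p : ℕ) : CommRing (SqrtA p) :=
  inferInstanceAs (CommRing (_ ⧸ _))

/-- The class of the variable `xᵢ` in `A`. -/
noncomputable def SqrtA.x (p : ℕ) (i : ℕ) : SqrtA p :=
  Ideal.Quotient.mk _ (MvPolynomial.X i)

/-- The ring `B = A/(x₀)`. -/
def SqrtB (p : ℕ) : Type :=
  SqrtA p ⧸ Ideal.span {SqrtA.x p 0}

noncomputable instance (p : ℕ) : CommRing (SqrtB p) :=
  inferInstanceAs (CommRing (_ ⧸ _))

/-- The class of `xᵢ` in `B`. -/
noncomputable def SqrtB.x (p : ℕ) (i : ℕ) : SqrtB p :=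
  Ideal.Quotient.mk _ (SqrtA.x p i)

section Aux

open MvPolynomial HahnSeries

variable (p : ℕ)

lemma sqrtA_x_sq (i : ℕ) : SqrtA.x p (i + 1) ^ 2 = SqrtA.x p i := by
  have h : (Ideal.Quotient.mk _ (MvPolynomial.X (i + 1) ^ 2 : MvPolynomial ℕ (ZMod p)) :
      SqrtA p) = Ideal.Quotient.mk _ (MvPolynomial.X i) := by
    rw [Ideal.Quotient.eq]
    exact Ideal.subset_span ⟨i, rfl⟩
  have h2 := (map_pow _ _ 2).symm.trans h
  exact h2

lemma sqrtB_x_sq (i : ℕ) : SqrtB.x p (i + 1) ^ 2 = SqrtB.x p i := by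
  have h := congrArg (Ideal.Quotient.mk (Ideal.span {SqrtA.x p 0})) (sqrtA_x_sq p i)
  rw [map_pow] at h
  exact h

lemma sqrtB_x_zero : SqrtB.x p 0 = 0 :=
  Ideal.Quotient.eq_zero_iff_mem.2 (Ideal.subset_span rfl)

lemma sqrtB_x_pow (i : ℕ) : SqrtB.x p i ^ (2 ^ i) = 0 := by
  induction i with
  | zero => simpa using sqrtB_x_zero p
  | succ i ih => rw [pow_succ', pow_mul, sqrtB_x_sq, ih]

/-- evaluation of everything at zero -/
noncomputable def psiPoly : MvPolynomial ℕ (ZMod p) →+* ZMod p :=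
  eval₂Hom (RingHom.id _) (fun _ => 0)

lemma psiPoly_rel : ∀ f ∈ ({f : MvPolynomial ℕ (ZMod p) |
    ∃ i : ℕ, f = MvPolynomial.X (i + 1) ^ 2 - MvPolynomial.X i}), psiPoly p f = 0 := by
  rintro f ⟨i, rfl⟩
  simp [psiPoly]

noncomputable def psiA : SqrtA p →+* ZMod p :=
  Ideal.Quotient.lift _ (psiPoly p) (fun f hf => by
    have h : Ideal.span {f : MvPolynomial ℕ (ZMod p) |
        ∃ i : ℕ, f = MvPolynomial.X (i + 1) ^ 2 - MvPolynomial.X i} ≤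
        RingHom.ker (psiPoly p) :=
      Ideal.span_le.2 (fun g hg => psiPoly_rel p g hg)
    exact h hf)

noncomputable def psiB : SqrtB p →+* ZMod p :=
  Ideal.Quotient.lift _ (psiA p) (fun f hf => by
    have h : Ideal.span {SqrtA.x p 0} ≤ RingHom.ker (psiA p) := by
      refine Ideal.span_le.2 ?_
      rintro g rfl
      rw [SetLike.mem_coe, RingHom.mem_ker]
      unfold psiA SqrtA.x
      show psiPoly p (MvPolynomial.X 0) = 0
      simp [psiPoly]
    exact h hf)

/-- the ZMod p → B/nil map -/
noncomputable def chi : ZMod p →+* SqrtB p ⧸ nilradical (SqrtB p) :=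
  ((Ideal.Quotient.mk (nilradical (SqrtB p))).comp
    ((Ideal.Quotient.mk (Ideal.span {SqrtA.x p 0})).comp
      (Ideal.Quotient.mk _))).comp (MvPolynomial.C)

noncomputable def psiN [Fact p.Prime] : SqrtB p ⧸ nilradical (SqrtB p) →+* ZMod p :=
  Ideal.Quotient.lift _ (psiB p)
    (fun f hf => ((mem_nilradical.1 hf).map (psiB p)).eq_zero)

/-- map to Hahn series with value group `ℚ≥0`, sending `xᵢ` to `t^(2⁻ⁱ)`. -/
noncomputable def phiPoly : MvPolynomial ℕ (ZMod p) →+* HahnSeries ℚ≥0 (ZMod p) :=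
  eval₂Hom HahnSeries.C (fun i => HahnSeries.single ((2 : ℚ≥0) ^ i)⁻¹ 1)

lemma exp_aux (i : ℕ) :
    ((2 : ℚ≥0) ^ (i + 1))⁻¹ + ((2 : ℚ≥0) ^ (i + 1))⁻¹ = ((2 : ℚ≥0) ^ i)⁻¹ := by
  rw [← two_mul, pow_succ, mul_inv, mul_comm ((2 : ℚ≥0) ^ i)⁻¹, ← mul_assoc,
    mul_inv_cancel₀ (two_ne_zero), one_mul]

lemma phiPoly_rel : ∀ f ∈ ({f : MvPolynomial ℕ (ZMod p) |
    ∃ i : ℕ, f = MvPolynomial.X (i + 1) ^ 2 - MvPolynomial.X i}), phiPoly p f = 0 := by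
  rintro f ⟨i, rfl⟩
  rw [map_sub, map_pow]
  have hX : ∀ j : ℕ, phiPoly p (MvPolynomial.X j) =
      HahnSeries.single ((2 : ℚ≥0) ^ j)⁻¹ 1 := fun j => by simp [phiPoly]
  rw [hX, hX, pow_two, HahnSeries.single_mul_single, mul_one, exp_aux, sub_self]

noncomputable def phiA : SqrtA p →+* HahnSeries ℚ≥0 (ZMod p) :=
  Ideal.Quotient.lift _ (phiPoly p) (fun f hf => by
    have h : Ideal.span {f : MvPolynomial ℕ (ZMod p) |
        ∃ i : ℕ, f = MvPolynomial.X (i + 1) ^ 2 - MvPolynomial.X i} ≤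
        RingHom.ker (phiPoly p) :=
      Ideal.span_le.2 (fun g hg => phiPoly_rel p g hg)
    exact h hf)

noncomputable def phiB : SqrtB p →+*
    (HahnSeries ℚ≥0 (ZMod p) ⧸ Ideal.span {HahnSeries.single (1 : ℚ≥0) (1 : ZMod p)}) :=
  Ideal.Quotient.lift _ ((Ideal.Quotient.mk _).comp (phiA p)) (fun f hf => by
    have h : Ideal.span {SqrtA.x p 0} ≤
        RingHom.ker ((Ideal.Quotient.mk
          (Ideal.span {HahnSeries.single (1 : ℚ≥0) (1 : ZMod p)})).comp (phiA p)) := by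
      refine Ideal.span_le.2 ?_
      rintro g rfl
      rw [SetLike.mem_coe, RingHom.mem_ker, RingHom.comp_apply]
      have h1 : phiA p (SqrtA.x p 0) = HahnSeries.single (1 : ℚ≥0) (1 : ZMod p) := by
        show phiPoly p (MvPolynomial.X 0) = _
        simp [phiPoly]
      rw [h1]
      exact Ideal.Quotient.eq_zero_iff_mem.2 (Ideal.subset_span rfl)
    exact h hf)

lemma sqrtB_x_one_ne_zero [Fact p.Prime] : SqrtB.x p 1 ≠ 0 := by
  intro h
  have h2 : phiB p (SqrtB.x p 1) = 0 := by rw [h, map_zero]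
  have h3 : phiB p (SqrtB.x p 1) = Ideal.Quotient.mk _
      (HahnSeries.single ((2 : ℚ≥0))⁻¹ (1 : ZMod p)) := by
    show Ideal.Quotient.mk _ (phiPoly p (MvPolynomial.X 1)) = _
    simp [phiPoly]
  rw [h3] at h2
  have h4 : HahnSeries.single ((2 : ℚ≥0))⁻¹ (1 : ZMod p) ∈
      Ideal.span {HahnSeries.single (1 : ℚ≥0) (1 : ZMod p)} :=
    Ideal.Quotient.eq_zero_iff_mem.1 h2
  obtain ⟨g, hg⟩ := Ideal.mem_span_singleton.1 h4
  have hL : HahnSeries.single ((2 : ℚ≥0))⁻¹ (1 : ZMod p) ≠ 0 :=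
    HahnSeries.single_ne_zero one_ne_zero
  have hg0 : g ≠ 0 := by
    rintro rfl
    rw [mul_zero] at hg
    exact hL hg
  have horder := congrArg HahnSeries.order hg
  rw [HahnSeries.order_single one_ne_zero,
    HahnSeries.order_mul (HahnSeries.single_ne_zero one_ne_zero) hg0,
    HahnSeries.order_single one_ne_zero] at horder
  have hle : (1 : ℚ≥0) ≤ (2 : ℚ≥0)⁻¹ := horder ▸ le_self_add
  have hlt : ((2 : ℚ≥0))⁻¹ < 1 := by
    rw [inv_lt_one₀ (by norm_num : (0 : ℚ≥0) < 2)]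
    norm_num
  exact absurd (lt_of_le_of_lt hle hlt) (lt_irrefl _)

end Aux

theorem stmt_9 (p : ℕ) [Fact p.Prime] :
    (∀ i : ℕ, IsNilpotent (SqrtB.x p i)) ∧
    Nonempty ((SqrtB p ⧸ nilradical (SqrtB p)) ≃+* ZMod p) ∧
    ¬ IsReduced (SqrtB p) := by
  refine ⟨fun i => ⟨2 ^ i, sqrtB_x_pow p i⟩, ?_, ?_⟩
  · refine ⟨RingEquiv.ofRingHom (psiN p) (chi p) (Subsingleton.elim _ _) ?_⟩
    apply Ideal.Quotient.ringHom_ext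
    apply Ideal.Quotient.ringHom_ext
    apply Ideal.Quotient.ringHom_ext
    apply MvPolynomial.ringHom_ext
    · intro a
      show chi p (psiN p ((Ideal.Quotient.mk _) ((Ideal.Quotient.mk _)
        ((Ideal.Quotient.mk _) (MvPolynomial.C a))))) = _
      have ha : psiN p ((Ideal.Quotient.mk (nilradical (SqrtB p)))
          ((Ideal.Quotient.mk (Ideal.span {SqrtA.x p 0}))
            ((Ideal.Quotient.mk _) (MvPolynomial.C a)))) = a := by
        show psiPoly p (MvPolynomial.C a) = a
        simp [psiPoly]
      rw [ha]
      rfl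
    · intro i
      have hR : (RingHom.id (SqrtB p ⧸ nilradical (SqrtB p))).comp
          ((((Ideal.Quotient.mk (nilradical (SqrtB p))).comp
            (Ideal.Quotient.mk (Ideal.span {SqrtA.x p 0}))).comp
            (Ideal.Quotient.mk _))) (MvPolynomial.X i) = 0 := by
        show Ideal.Quotient.mk (nilradical (SqrtB p)) (SqrtB.x p i) = 0
        exact Ideal.Quotient.eq_zero_iff_mem.2 (mem_nilradical.2 ⟨2 ^ i, sqrtB_x_pow p i⟩)
      have hL : ((chi p).comp (psiN p)).comp
          ((((Ideal.Quotient.mk (nilradical (SqrtB p))).comp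
            (Ideal.Quotient.mk (Ideal.span {SqrtA.x p 0}))).comp
            (Ideal.Quotient.mk _))) (MvPolynomial.X i) = 0 := by
        show chi p (psiPoly p (MvPolynomial.X i)) = 0
        have : psiPoly p (MvPolynomial.X i) = 0 := by simp [psiPoly]
        rw [this, map_zero]
      exact hL.trans hR.symm
  · intro hred
    have hnil : IsNilpotent (SqrtB.x p 1) := ⟨2, by
      have := sqrtB_x_sq p 0
      rw [this, sqrtB_x_zero]⟩
    exact sqrtB_x_one_ne_zero p (hnil.eq_zero)
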